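/- arXiv:1312.5168 — 5 statements merged into one kernel-verified Lean document; each statement's English description precedes it below -/
import Mathlib

section
/- Let (X, 𝒜, μ) be a finite measure space with 0 < μ(X) < ∞ and let S : X → X be measure preserving (μ(S⁻¹(A)) = μ(A) for all A ∈ 𝒜) and ergodic (every A ∈ 𝒜 with S⁻¹(A) = A satisfies μ(A) = 0 or μ(X∖A) = 0). Then for every integrable function ϑ : X → ℝ, for μ-almost every x ∈ X the time averages (1/n) Σ_{k=0}^{n-1} ϑ(Sᵏ(x)) converge, as n → ∞, to the space average (1/μ(X)) ∫_X ϑ dμ. -/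
/-!
Garsia's maximal ergodic theorem: for a measure-preserving `f` and integrable `g`, the integral
of `g` over the set where some Birkhoff sum `Sₙ g = g + g ∘ f + ⋯ + g ∘ fⁿ⁻¹` is positive is
nonnegative. If `∫ g < 0`, the set where the `Sₙ g` are unbounded above is strictly invariant, so
by ergodicity it is null or conull, and conull would force `∫ g ≥ 0`. Hence `Sₙ g` is a.e. bounded
above. Taking `g = ϑ - c` for each rational `c` above the space average bounds the lim sup of the
time averages by the space average; taking `-ϑ` bounds the lim inf.
-/

open MeasureTheory Filter Topology Set Finset

lemma bddAbove_range_iff_of_succ_eq_const_add {s t : ℕ → ℝ} (c : ℝ)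
    (h : ∀ n, s (n + 1) = c + t n) : BddAbove (Set.range s) ↔ BddAbove (Set.range t) := by
  constructor
  · rintro ⟨C, hC⟩
    exact ⟨C - c, forall_mem_range.2 fun n => by linarith [hC ⟨n + 1, rfl⟩, h n]⟩
  · rintro ⟨C, hC⟩
    refine ⟨max (s 0) (c + C), forall_mem_range.2 fun n => ?_⟩
    cases n with
    | zero => exact le_max_left _ _
    | succ n => exact (h n).trans_le <| le_max_of_le_right <| by linarith [hC ⟨n, rfl⟩]

section

variable {α : Type*} {f : α → α} {g : α → ℝ}

noncomputable def maxBirkhoffSum (f : α → α) (g : α → ℝ) (N : ℕ) : α → ℝ :=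
  (range (N + 1)).sup' nonempty_range_add_one fun n => birkhoffSum f g n

lemma maxBirkhoffSum_apply (N : ℕ) (x : α) :
    maxBirkhoffSum f g N x = (range (N + 1)).sup' nonempty_range_add_one
      fun n => birkhoffSum f g n x :=
  Finset.sup'_apply _ _ _

lemma birkhoffSum_le_maxBirkhoffSum {n N : ℕ} (hn : n ≤ N) (x : α) :
    birkhoffSum f g n x ≤ maxBirkhoffSum f g N x := by
  rw [maxBirkhoffSum_apply]
  exact le_sup' (fun n => birkhoffSum f g n x) (mem_range.2 (Nat.lt_succ_of_le hn))

lemma exists_birkhoffSum_eq_maxBirkhoffSum (N : ℕ) (x : α) :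
    ∃ n ≤ N, birkhoffSum f g n x = maxBirkhoffSum f g N x := by
  obtain ⟨n, hn, heq⟩ := exists_mem_eq_sup' nonempty_range_add_one fun n => birkhoffSum f g n x
  exact ⟨n, Nat.lt_succ_iff.1 (mem_range.1 hn), by rw [maxBirkhoffSum_apply, heq]⟩

lemma monotone_maxBirkhoffSum (x : α) : Monotone fun N => maxBirkhoffSum f g N x := by
  intro M N hMN
  simp only [maxBirkhoffSum_apply]
  exact sup'_mono _ (range_subset_range.2 (Nat.succ_le_succ hMN)) _

lemma zero_le_maxBirkhoffSum (N : ℕ) (x : α) : 0 ≤ maxBirkhoffSum f g N x :=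
  birkhoffSum_zero f g x ▸ birkhoffSum_le_maxBirkhoffSum (Nat.zero_le N) x

lemma maxBirkhoffSum_le_add_comp {N : ℕ} {x : α} (hx : 0 < maxBirkhoffSum f g N x) :
    maxBirkhoffSum f g N x ≤ g x + maxBirkhoffSum f g N (f x) := by
  obtain ⟨n, hnN, hn⟩ := exists_birkhoffSum_eq_maxBirkhoffSum (f := f) (g := g) N x
  cases n with
  | zero => simp [← hn] at hx
  | succ n =>
    rw [← hn, birkhoffSum_succ']
    exact add_le_add_right (birkhoffSum_le_maxBirkhoffSum (by omega) _) _

variable [MeasurableSpace α] {μ : Measure α}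

lemma measurable_birkhoffSum (hf : Measurable f) (hg : Measurable g) (n : ℕ) :
    Measurable (birkhoffSum f g n) :=
  Finset.measurable_sum _ fun k _ => hg.comp (hf.iterate k)

lemma measurable_maxBirkhoffSum (hf : Measurable f) (hg : Measurable g) (N : ℕ) :
    Measurable (maxBirkhoffSum f g N) :=
  Finset.measurable_sup' _ fun n _ => measurable_birkhoffSum hf hg n

lemma MeasureTheory.MeasurePreserving.integrable_birkhoffSum (hf : MeasurePreserving f μ μ)
    (hg : Integrable g μ) (n : ℕ) : Integrable (birkhoffSum f g n) μ :=
  integrable_finsetSum _ fun k _ => (hf.iterate k).integrable_comp_of_integrable hg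

lemma MeasureTheory.MeasurePreserving.integrable_maxBirkhoffSum (hf : MeasurePreserving f μ μ)
    (hg : Integrable g μ) (N : ℕ) : Integrable (maxBirkhoffSum f g N) μ :=
  sup'_induction (p := (Integrable · μ)) _ _ (fun _ h₁ _ h₂ => h₁.sup h₂)
    fun n _ => hf.integrable_birkhoffSum hg n

lemma MeasureTheory.MeasurePreserving.setIntegral_maxBirkhoffSum_pos_nonneg
    (hf : MeasurePreserving f μ μ) (hgm : Measurable g) (hgi : Integrable g μ) (N : ℕ) :
    0 ≤ ∫ x in {x | 0 < maxBirkhoffSum f g N x}, g x ∂μ := by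
  set M := maxBirkhoffSum f g N
  have hMm : Measurable M := measurable_maxBirkhoffSum hf.measurable hgm N
  have hMi : Integrable M μ := hf.integrable_maxBirkhoffSum hgi N
  have hMfi : Integrable (fun x => M (f x)) μ := hf.integrable_comp_of_integrable hMi
  have hs : MeasurableSet {x | 0 < M x} := measurableSet_lt measurable_const hMm
  have hinv : ∫ x, M (f x) ∂μ = ∫ x, M x ∂μ := by
    rw [← integral_map hf.aemeasurable (hf.map_eq ▸ hMm.aestronglyMeasurable), hf.map_eq]
  have hle : ∀ x, M x - M (f x) ≤ {x | 0 < M x}.indicator g x := by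
    intro x
    by_cases hx : 0 < M x
    · rw [indicator_of_mem (show x ∈ {x | 0 < M x} from hx)]
      linarith [maxBirkhoffSum_le_add_comp hx]
    · rw [indicator_of_notMem (show x ∉ {x | 0 < M x} from hx)]
      linarith [zero_le_maxBirkhoffSum (f := f) (g := g) N (f x)]
  calc (0 : ℝ) = ∫ x, (M x - M (f x)) ∂μ := by rw [integral_sub hMi hMfi, hinv, sub_self]
    _ ≤ ∫ x, {x | 0 < M x}.indicator g x ∂μ :=
      integral_mono (hMi.sub hMfi) (hgi.indicator hs) hle
    _ = ∫ x in {x | 0 < M x}, g x ∂μ := integral_indicator hs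

/-- **Maximal ergodic theorem**. -/
theorem MeasureTheory.MeasurePreserving.setIntegral_birkhoffSum_pos_nonneg
    (hf : MeasurePreserving f μ μ) (hgm : Measurable g) (hgi : Integrable g μ) :
    0 ≤ ∫ x in {x | ∃ n, 0 < birkhoffSum f g n x}, g x ∂μ := by
  have hunion : {x | ∃ n, 0 < birkhoffSum f g n x} = ⋃ N, {x | 0 < maxBirkhoffSum f g N x} := by
    ext x
    simp only [mem_ofPred_eq, mem_iUnion]
    constructor
    · rintro ⟨n, hn⟩
      exact ⟨n, hn.trans_le (birkhoffSum_le_maxBirkhoffSum le_rfl x)⟩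
    · rintro ⟨N, hN⟩
      obtain ⟨n, -, hn⟩ := exists_birkhoffSum_eq_maxBirkhoffSum (f := f) (g := g) N x
      exact ⟨n, hn ▸ hN⟩
  rw [hunion]
  refine ge_of_tendsto' (tendsto_setIntegral_of_monotone
    (fun N => measurableSet_lt measurable_const (measurable_maxBirkhoffSum hf.measurable hgm N))
    (fun M N hMN x hx => hx.trans_le (monotone_maxBirkhoffSum x hMN)) hgi.integrableOn)
    (hf.setIntegral_maxBirkhoffSum_pos_nonneg hgm hgi)

theorem Ergodic.ae_bddAbove_birkhoffSum_of_integral_neg (hf : Ergodic f μ) (hgm : Measurable g)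
    (hgi : Integrable g μ) (hneg : ∫ x, g x ∂μ < 0) :
    ∀ᵐ x ∂μ, BddAbove (Set.range fun n => birkhoffSum f g n x) := by
  set E := {x | BddAbove (Set.range fun n => birkhoffSum f g n x)}
  have hEm : MeasurableSet E :=
    measurableSet_bddAbove_range (measurable_birkhoffSum hf.measurable hgm)
  have hEinv : f ⁻¹' E = E := by
    ext x
    exact (bddAbove_range_iff_of_succ_eq_const_add (g x) (birkhoffSum_succ' f g · x)).symm
  refine (hf.ae_mem_or_ae_notMem hEm hEinv).resolve_right fun hE => hneg.not_ge ?_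
  have hpos : ∀ᵐ x ∂μ, x ∈ {x | ∃ n, 0 < birkhoffSum f g n x} := by
    filter_upwards [hE] with x hx
    obtain ⟨_, ⟨n, rfl⟩, hn⟩ := not_bddAbove_iff.1 hx 0
    exact ⟨n, hn⟩
  rw [← Measure.restrict_eq_self_of_ae_mem hpos]
  exact hf.setIntegral_birkhoffSum_pos_nonneg hgm hgi

theorem Ergodic.ae_eventually_birkhoffAverage_lt [IsFiniteMeasure μ] (hf : Ergodic f μ)
    (hgm : Measurable g) (hgi : Integrable g μ) {c : ℝ}
    (hc : ∫ x, g x ∂μ < μ.real univ * c) :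
    ∀ᵐ x ∂μ, ∀ b > c, ∀ᶠ n in atTop, birkhoffAverage ℝ f g n x < b := by
  have hneg : ∫ x, (g x - c) ∂μ < 0 := by
    rw [integral_sub hgi (integrable_const c), integral_const, smul_eq_mul]
    linarith
  filter_upwards [hf.ae_bddAbove_birkhoffSum_of_integral_neg (hgm.sub measurable_const)
    (hgi.sub (integrable_const c)) hneg] with x ⟨C, hC⟩ b hb
  have hsum : ∀ n, birkhoffSum f g n x ≤ n * c + C := fun n => by
    have hconst : birkhoffSum f (fun _ => c) n x = n * c := by simp [birkhoffSum]
    linarith [hC ⟨n, rfl⟩, birkhoffSum_sub f g (fun _ => c) n x]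
  have hlim : Tendsto (fun n : ℕ => c + C / n) atTop (𝓝 c) := by
    simpa using tendsto_const_nhds.add (tendsto_const_div_atTop_nhds_zero_nat C)
  filter_upwards [hlim.eventually (gt_mem_nhds hb), eventually_gt_atTop 0] with n hn hn0
  calc birkhoffAverage ℝ f g n x = (n : ℝ)⁻¹ * birkhoffSum f g n x := rfl
    _ ≤ (n : ℝ)⁻¹ * (n * c + C) := by gcongr; exact hsum n
    _ = c + C / n := by field_simp
    _ < b := hn

theorem Ergodic.ae_eventually_birkhoffAverage_lt_of_mean_lt [IsFiniteMeasure μ] [NeZero μ]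
    (hf : Ergodic f μ) (hg : Integrable g μ) :
    ∀ᵐ x ∂μ, ∀ b, (μ.real univ)⁻¹ * ∫ x, g x ∂μ < b →
      ∀ᶠ n in atTop, birkhoffAverage ℝ f g n x < b := by
  set g' := hg.aemeasurable.mk g
  have hg' : Integrable g' μ := hg.congr hg.aemeasurable.ae_eq_mk
  have hint : ∫ x, g' x ∂μ = ∫ x, g x ∂μ := integral_congr_ae hg.aemeasurable.ae_eq_mk.symm
  have hae : ∀ᵐ x ∂μ, ∀ n, birkhoffAverage ℝ f g n x = birkhoffAverage ℝ f g' n x :=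
    ae_all_iff.2 fun n => hf.quasiMeasurePreserving.birkhoffAverage_ae_eq_of_ae_eq ℝ
      hg.aemeasurable.ae_eq_mk n
  have hrat : ∀ᵐ x ∂μ, ∀ q : {q : ℚ // (μ.real univ)⁻¹ * ∫ x, g x ∂μ < q}, ∀ b > (q : ℝ),
      ∀ᶠ n in atTop, birkhoffAverage ℝ f g' n x < b :=
    ae_all_iff.2 fun q => hf.ae_eventually_birkhoffAverage_lt hg.aemeasurable.measurable_mk hg'
      (by rw [hint]; exact (inv_mul_lt_iff₀ measureReal_univ_pos).1 q.2)
  filter_upwards [hae, hrat] with x hx hq b hb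
  obtain ⟨q, hq₁, hq₂⟩ := exists_rat_btwn hb
  simpa only [hx] using hq ⟨q, hq₁⟩ b hq₂

theorem Ergodic.ae_tendsto_birkhoffAverage [IsFiniteMeasure μ] [NeZero μ] (hf : Ergodic f μ)
    (hg : Integrable g μ) :
    ∀ᵐ x ∂μ, Tendsto (birkhoffAverage ℝ f g · x) atTop
      (𝓝 ((μ.real univ)⁻¹ * ∫ x, g x ∂μ)) := by
  filter_upwards [hf.ae_eventually_birkhoffAverage_lt_of_mean_lt hg,
    hf.ae_eventually_birkhoffAverage_lt_of_mean_lt hg.neg] with x hupper hlower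
  refine tendsto_order.2 ⟨fun b hb => ?_, hupper⟩
  filter_upwards [hlower (-b) (by rw [Pi.neg_def, integral_neg]; linarith)] with n hn
  rw [birkhoffAverage_neg] at hn
  exact neg_lt_neg_iff.1 hn

end

/-- **Birkhoff ergodic theorem.** Let `(X, 𝒜, μ)` be a finite measure space with
`0 < μ(X) < ∞` and let `S : X → X` be measure preserving and ergodic.  Then for every integrable
`ϑ : X → ℝ`, for μ-a.e. `x` the time averages `(1/n) Σ_{k<n} ϑ(Sᵏ x)` converge to the space
average `(1/μ(X)) ∫_X ϑ dμ`. -/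
theorem birkhoff_ergodic_average
    {X : Type*} [MeasurableSpace X] (μ : Measure X) [IsFiniteMeasure μ]
    (hμpos : 0 < μ Set.univ)
    (S : X → X) (hS : Measurable S)
    (hpres : ∀ A : Set X, MeasurableSet A → μ (S ⁻¹' A) = μ A)
    (herg : ∀ A : Set X, MeasurableSet A → S ⁻¹' A = A → μ A = 0 ∨ μ Aᶜ = 0)
    (ϑ : X → ℝ) (hϑ : Integrable ϑ μ) :
    ∀ᵐ x ∂μ, Tendsto
      (fun n : ℕ => (n : ℝ)⁻¹ * ∑ k ∈ Finset.range n, ϑ (S^[k] x))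
      atTop (𝓝 (((μ Set.univ).toReal)⁻¹ * ∫ x, ϑ x ∂μ)) := by
  have hergodic : Ergodic S μ :=
    { measurable := hS
      map_eq := Measure.ext fun A hA => (Measure.map_apply hS hA).trans (hpres A hA)
      aeconst_set := fun A hA hinv => eventuallyConst_set'.2 <| by
        simpa only [ae_eq_empty, ae_eq_univ] using herg A hA hinv }
  have : NeZero μ := ⟨fun h => by simp [h] at hμpos⟩
  exact hergodic.ae_tendsto_birkhoffAverage hϑ
end

section
/- Let (X, 𝒜, μ) be a probability space (μ(X) = 1) and let S : X → X be measure preserving, with Frobenius–Perron operator P. Then S is ergodic (every A ∈ 𝒜 with S⁻¹(A) = A satisfies μ(A) = 0 or μ(A) = 1) if and only if for every density ϑ the Cesàro averages of the iterates Pᵏϑ converge weakly to the constant function 1, i.e. for every bounded measurable ζ : X → ℝ, (1/n) Σ_{k=0}^{n-1} ∫_X (Pᵏϑ) ζ dμ → ∫_X ζ dμ as n → ∞. -/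
/-!
Pairing with the Frobenius–Perron operator is dual to composition with `S`:
`∫ (Pᵏϑ) ζ = ∫ ϑ (ζ ∘ Sᵏ)`, because `(Pϑ) μ` is the pushforward of `ϑ μ` under `S`. Hence the
Cesàro averages in question are `∫ ϑ Aₙζ`, where `Aₙζ` are the Birkhoff averages of `ζ`.

If `S` is ergodic, von Neumann's mean ergodic theorem makes `Aₙζ` converge in `L²`, hence in
measure, to an `S`-invariant and therefore constant function; testing against `ϑ = 1` shows that
the constant is `∫ ζ`. Since `|Aₙζ| ≤ sup |ζ|`, dominated convergence along a.e. convergent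
subsequences gives `∫ ϑ Aₙζ → ∫ ζ`. Conversely, if `S⁻¹ A = A` with `μ A > 0`, then `1_A` is
invariant, so for `ϑ = 1_A / μ A` all the averages equal `∫ ϑ 1_A = 1`, whence `μ A = ∫ 1_A = 1`.
-/

open MeasureTheory Filter Topology

section

variable {X : Type*} [MeasurableSpace X] {μ : Measure X}

lemma norm_birkhoffAverage_le {α E : Type*} [SeminormedAddCommGroup E] [NormedSpace ℝ E]
    {f : α → α} {g : α → E} {C : ℝ} (hC : ∀ x, ‖g x‖ ≤ C) (n : ℕ) (x : α) :
    ‖birkhoffAverage ℝ f g n x‖ ≤ C := by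
  rcases eq_or_ne n 0 with rfl | hn
  · simpa using (norm_nonneg _).trans (hC x)
  calc ‖birkhoffAverage ℝ f g n x‖
      ≤ (n : ℝ)⁻¹ * ∑ k ∈ Finset.range n, ‖g (f^[k] x)‖ := by
        rw [birkhoffAverage, norm_smul, Real.norm_eq_abs, abs_inv, Nat.abs_cast]
        exact mul_le_mul_of_nonneg_left (norm_sum_le _ _) (by positivity)
    _ ≤ (n : ℝ)⁻¹ * (n * C) := by
        gcongr
        simpa using Finset.sum_le_card_nsmul (Finset.range n) _ C fun k _ => hC (f^[k] x)
    _ = C := by field_simp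

lemma Measurable.birkhoffAverage {f : X → X} {g : X → ℝ} (hg : Measurable g) (hf : Measurable f)
    (n : ℕ) : Measurable (birkhoffAverage ℝ f g n) :=
  ((Finset.measurable_sum (Finset.range n) fun k _ => hg.comp (hf.iterate k)).const_smul
    (n : ℝ)⁻¹ :)

lemma MeasureTheory.MeasurePreserving.integral_birkhoffAverage {E : Type*} [NormedAddCommGroup E]
    [NormedSpace ℝ E] {f : X → X} (hf : MeasurePreserving f μ μ) {g : X → E}
    (hg : Integrable g μ) {n : ℕ} (hn : n ≠ 0) :
    ∫ x, birkhoffAverage ℝ f g n x ∂μ = ∫ x, g x ∂μ := by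
  have hcomp : ∀ k, ∫ x, g (f^[k] x) ∂μ = ∫ x, g x ∂μ := fun k => by
    rw [← integral_map (hf.iterate k).aemeasurable (by rw [(hf.iterate k).map_eq]; exact hg.1),
      (hf.iterate k).map_eq]
  have hint : ∀ k, Integrable (fun x => g (f^[k] x)) μ := fun k =>
    ((hf.iterate k).integrable_comp hg.1).2 hg
  simp only [birkhoffAverage, birkhoffSum, integral_smul, integral_finsetSum _ fun k _ => hint k,
    hcomp, Finset.sum_const, Finset.card_range]
  rw [← Nat.cast_smul_eq_nsmul ℝ, smul_smul, inv_mul_cancel₀ (by exact_mod_cast hn), one_smul]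

lemma MeasureTheory.Lp.coeFn_birkhoffSum_compMeasurePreserving {E : Type*} [NormedAddCommGroup E]
    {p : ENNReal} {f : X → X} (hf : MeasurePreserving f μ μ) (g : Lp E p μ) (n : ℕ) :
    ⇑(birkhoffSum (compMeasurePreserving f hf) _root_.id n g) =ᵐ[μ] birkhoffSum f g n := by
  induction n with
  | zero => simpa [birkhoffSum_zero'] using Lp.coeFn_zero E p μ
  | succ n ih =>
    have hn : ⇑((compMeasurePreserving f hf)^[n] g) =ᵐ[μ] g ∘ f^[n] := by
      rw [compMeasurePreserving_iterate]
      exact coeFn_compMeasurePreserving g (hf.iterate n)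
    filter_upwards [Lp.coeFn_add (birkhoffSum (compMeasurePreserving f hf) _root_.id n g)
      ((compMeasurePreserving f hf)^[n] g), ih, hn] with x hadd hsum hiter
    rw [birkhoffSum_succ, birkhoffSum_succ, id, hadd, Pi.add_apply, hsum, hiter,
      Function.comp_apply]

lemma MeasureTheory.Lp.coeFn_birkhoffAverage_compMeasurePreserving {E : Type*}
    [NormedAddCommGroup E] [NormedSpace ℝ E] {p : ENNReal} {f : X → X}
    (hf : MeasurePreserving f μ μ) (g : Lp E p μ) (n : ℕ) :
    ⇑(birkhoffAverage ℝ (compMeasurePreserving f hf) _root_.id n g)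
      =ᵐ[μ] birkhoffAverage ℝ f g n := by
  filter_upwards
    [Lp.coeFn_smul (n : ℝ)⁻¹ (birkhoffSum (compMeasurePreserving f hf) _root_.id n g),
    coeFn_birkhoffSum_compMeasurePreserving hf g n] with x hsmul hsum
  simp [birkhoffAverage, hsmul, hsum]

theorem Ergodic.exists_tendstoInMeasure_birkhoffAverage {E : Type*} [NormedAddCommGroup E]
    [InnerProductSpace ℝ E] [CompleteSpace E] {f : X → X} (hf : Ergodic f μ) {g : X → E}
    (hg : MemLp g 2 μ) :
    ∃ c : E, TendstoInMeasure μ (birkhoffAverage ℝ f g) atTop fun _ => c := by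
  set T := (Lp.compMeasurePreservingₗᵢ ℝ f hf.toMeasurePreserving :
    Lp E 2 μ →ₗᵢ[ℝ] Lp E 2 μ).toContinuousLinearMap
  obtain ⟨g₀, hfix, hlim⟩ : ∃ g₀, T g₀ = g₀ ∧
      Tendsto (birkhoffAverage ℝ T _root_.id · (hg.toLp g)) atTop (𝓝 g₀) :=
    ⟨_, (LinearMap.mem_eqLocus ..).1 (Subtype.prop _),
      T.tendsto_birkhoffAverage_orthogonalProjection
        (LinearIsometry.norm_toContinuousLinearMap_le _) _⟩
  have hfix' : Lp.compMeasurePreserving f hf.toMeasurePreserving g₀ = g₀ := hfix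
  have hinv : g₀ ∘ f =ᵐ[μ] g₀ :=
    (Lp.coeFn_compMeasurePreserving g₀ hf.toMeasurePreserving).symm.trans (by rw [hfix'])
  obtain ⟨c, hc⟩ := hf.ae_eq_const_of_ae_eq_comp_ae (Lp.aestronglyMeasurable _) hinv
  refine ⟨c, ((tendstoInMeasure_of_tendsto_Lp hlim).congr_left fun n => ?_).congr_right hc⟩
  exact (Lp.coeFn_birkhoffAverage_compMeasurePreserving hf.toMeasurePreserving _ n).trans
    (hf.toMeasurePreserving.quasiMeasurePreserving.birkhoffAverage_ae_eq_of_ae_eq ℝ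
      hg.coeFn_toLp n)

lemma tendsto_integral_mul_of_tendstoInMeasure {ι : Type*} {u : Filter ι} [u.IsCountablyGenerated]
    {f : ι → X → ℝ} {f₀ g : X → ℝ} {C : ℝ} (hg : Integrable g μ)
    (hf : ∀ i, AEStronglyMeasurable (f i) μ) (hC : ∀ i, ∀ᵐ x ∂μ, ‖f i x‖ ≤ C)
    (hlim : TendstoInMeasure μ f u f₀) :
    Tendsto (fun i => ∫ x, g x * f i x ∂μ) u (𝓝 (∫ x, g x * f₀ x ∂μ)) := by
  refine tendsto_of_subseq_tendsto fun ns hns => ?_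
  obtain ⟨ms, -, hae⟩ := (hlim.comp hns).exists_seq_tendsto_ae
  refine ⟨ms, tendsto_integral_of_dominated_convergence (fun x => ‖g x‖ * C)
    (fun n => hg.1.mul (hf _)) (hg.norm.mul_const C) (fun n => ?_) ?_⟩
  · filter_upwards [hC (ns (ms n))] with x hx
    rw [norm_mul]
    exact mul_le_mul_of_nonneg_left hx (norm_nonneg _)
  · filter_upwards [hae] with x hx
    exact hx.const_mul (g x)

theorem Ergodic.tendstoInMeasure_birkhoffAverage_integral [IsProbabilityMeasure μ] {f : X → X}
    (hf : Ergodic f μ) {g : X → ℝ} (hg : Measurable g) {C : ℝ} (hC : ∀ x, ‖g x‖ ≤ C) :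
    TendstoInMeasure μ (birkhoffAverage ℝ f g) atTop fun _ => ∫ x, g x ∂μ := by
  obtain ⟨c, hc⟩ := hf.exists_tendstoInMeasure_birkhoffAverage
    (MemLp.of_bound hg.aestronglyMeasurable C (ae_of_all _ hC))
  have hlim_c : Tendsto (fun n => ∫ x, 1 * birkhoffAverage ℝ f g n x ∂μ) atTop
      (𝓝 (∫ _, 1 * c ∂μ)) :=
    tendsto_integral_mul_of_tendstoInMeasure (integrable_const 1)
      (fun n => (hg.birkhoffAverage hf.measurable n).aestronglyMeasurable)
      (fun n => ae_of_all _ (norm_birkhoffAverage_le hC n)) hc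
  have hlim_int : Tendsto (fun n => ∫ x, 1 * birkhoffAverage ℝ f g n x ∂μ) atTop
      (𝓝 (∫ x, g x ∂μ)) := by
    refine tendsto_const_nhds.congr' ((eventually_ne_atTop 0).mono fun n hn => ?_)
    simp only [one_mul]
    exact (hf.toMeasurePreserving.integral_birkhoffAverage
      (Integrable.of_bound hg.aestronglyMeasurable C (ae_of_all _ hC)) hn).symm
  have hc_eq : c = ∫ x, g x ∂μ := by simpa using tendsto_nhds_unique hlim_c hlim_int
  exact hc_eq ▸ hc

theorem MeasureTheory.MeasurePreserving.ergodic_of_prob_eq_zero_or_one [IsProbabilityMeasure μ]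
    {f : X → X} (hf : MeasurePreserving f μ μ)
    (h : ∀ A, MeasurableSet A → f ⁻¹' A = A → μ A = 0 ∨ μ A = 1) : Ergodic f μ := by
  refine ⟨hf, ⟨fun A hA hinv => eventuallyConst_set'.2 ?_⟩⟩
  rcases h A hA hinv with h0 | h1
  · exact .inl (ae_eq_empty.2 h0)
  · exact .inr (ae_eq_univ.2 ((prob_compl_eq_zero_iff hA).2 h1))

lemma integral_withDensity_ofReal_eq_integral_mul {g : X → ℝ} (hg : AEMeasurable g μ)
    (hg0 : 0 ≤ᵐ[μ] g) (ζ : X → ℝ) :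
    ∫ x, ζ x ∂μ.withDensity (fun x => ENNReal.ofReal (g x)) = ∫ x, g x * ζ x ∂μ := by
  rw [integral_withDensity_eq_integral_toReal_smul₀ hg.ennreal_ofReal
    (ae_of_all _ fun _ => ENNReal.ofReal_lt_top)]
  refine integral_congr_ae ?_
  filter_upwards [hg0] with x hx
  simp [ENNReal.toReal_ofReal hx]

lemma withDensity_ofReal_eq_map_of_setIntegral_preimage {S : X → X} (hS : Measurable S)
    {f g : X → ℝ} (hf : Integrable f μ) (hf0 : 0 ≤ᵐ[μ] f) (hg : Integrable g μ) (hg0 : 0 ≤ᵐ[μ] g)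
    (hfg : ∀ A, MeasurableSet A → ∫ x in A, g x ∂μ = ∫ x in S ⁻¹' A, f x ∂μ) :
    μ.withDensity (fun x => ENNReal.ofReal (g x))
      = (μ.withDensity fun x => ENNReal.ofReal (f x)).map S := by
  ext A hA
  rw [Measure.map_apply hS hA, withDensity_apply _ hA, withDensity_apply _ (hS hA),
    ← ofReal_integral_eq_lintegral_ofReal hg.integrableOn (ae_restrict_of_ae hg0),
    ← ofReal_integral_eq_lintegral_ofReal hf.integrableOn (ae_restrict_of_ae hf0), hfg A hA]

lemma integral_mul_eq_integral_mul_comp_of_setIntegral_preimage {S : X → X} (hS : Measurable S)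
    {f g : X → ℝ} (hf : Integrable f μ) (hf0 : 0 ≤ᵐ[μ] f) (hg : Integrable g μ) (hg0 : 0 ≤ᵐ[μ] g)
    (hfg : ∀ A, MeasurableSet A → ∫ x in A, g x ∂μ = ∫ x in S ⁻¹' A, f x ∂μ)
    {ζ : X → ℝ} (hζ : Measurable ζ) :
    ∫ x, g x * ζ x ∂μ = ∫ x, f x * ζ (S x) ∂μ := by
  rw [← integral_withDensity_ofReal_eq_integral_mul hg.aemeasurable hg0,
    ← integral_withDensity_ofReal_eq_integral_mul hf.aemeasurable hf0,
    withDensity_ofReal_eq_map_of_setIntegral_preimage hS hf hf0 hg hg0 hfg,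
    integral_map hS.aemeasurable hζ.aestronglyMeasurable]

def IsFrobeniusPerron (μ : Measure X) (S : X → X) (P : (X → ℝ) → X → ℝ) : Prop :=
  ∀ f : X → ℝ, Integrable f μ → 0 ≤ᵐ[μ] f →
    Integrable (P f) μ ∧ 0 ≤ᵐ[μ] P f ∧
      ∀ A : Set X, MeasurableSet A → ∫ x in A, P f x ∂μ = ∫ x in S ⁻¹' A, f x ∂μ

namespace IsFrobeniusPerron

variable {S : X → X} {P : (X → ℝ) → X → ℝ} {ϑ ζ : X → ℝ}

lemma integrable_iterate_and_nonneg (hP : IsFrobeniusPerron μ S P) (hϑ : Integrable ϑ μ)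
    (hϑ0 : 0 ≤ᵐ[μ] ϑ) (k : ℕ) : Integrable (P^[k] ϑ) μ ∧ 0 ≤ᵐ[μ] P^[k] ϑ := by
  induction k with
  | zero => exact ⟨hϑ, hϑ0⟩
  | succ k ih =>
    rw [Function.iterate_succ_apply']
    exact ⟨(hP _ ih.1 ih.2).1, (hP _ ih.1 ih.2).2.1⟩

lemma integral_iterate_mul (hP : IsFrobeniusPerron μ S P) (hS : Measurable S)
    (hϑ : Integrable ϑ μ) (hϑ0 : 0 ≤ᵐ[μ] ϑ) (hζ : Measurable ζ) (k : ℕ) :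
    ∫ x, (P^[k] ϑ) x * ζ x ∂μ = ∫ x, ϑ x * ζ (S^[k] x) ∂μ := by
  induction k generalizing ζ with
  | zero => rfl
  | succ k ih =>
    obtain ⟨hk, hk0⟩ := hP.integrable_iterate_and_nonneg hϑ hϑ0 k
    obtain ⟨hPk, hPk0, hPkS⟩ := hP _ hk hk0
    simp only [Function.iterate_succ_apply']
    rw [integral_mul_eq_integral_mul_comp_of_setIntegral_preimage hS hk hk0 hPk hPk0 hPkS hζ]
    exact ih (hζ.comp hS)

lemma cesaro_integral_iterate_mul_eq_integral_mul_birkhoffAverage (hP : IsFrobeniusPerron μ S P)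
    (hS : Measurable S) (hϑ : Integrable ϑ μ) (hϑ0 : 0 ≤ᵐ[μ] ϑ) (hζ : Measurable ζ) {C : ℝ}
    (hC : ∀ x, ‖ζ x‖ ≤ C) (n : ℕ) :
    (n : ℝ)⁻¹ * ∑ k ∈ Finset.range n, ∫ x, (P^[k] ϑ) x * ζ x ∂μ
      = ∫ x, ϑ x * birkhoffAverage ℝ S ζ n x ∂μ := by
  have hint : ∀ k, Integrable (fun x => ϑ x * ζ (S^[k] x)) μ := fun k =>
    hϑ.mul_bdd (hζ.comp (hS.iterate k)).aestronglyMeasurable (ae_of_all _ fun _ => hC _)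
  simp only [hP.integral_iterate_mul hS hϑ hϑ0 hζ, ← integral_finsetSum _ fun k _ => hint k,
    ← integral_const_mul, birkhoffAverage, birkhoffSum, smul_eq_mul, Finset.mul_sum, mul_left_comm]

theorem tendsto_cesaro_of_ergodic [IsProbabilityMeasure μ] (hP : IsFrobeniusPerron μ S P)
    (hS : Ergodic S μ) (hϑ : Integrable ϑ μ) (hϑ0 : 0 ≤ᵐ[μ] ϑ) (hϑ1 : ∫ x, ϑ x ∂μ = 1)
    (hζ : Measurable ζ) {C : ℝ} (hC : ∀ x, ‖ζ x‖ ≤ C) :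
    Tendsto (fun n : ℕ => (n : ℝ)⁻¹ * ∑ k ∈ Finset.range n, ∫ x, (P^[k] ϑ) x * ζ x ∂μ)
      atTop (𝓝 (∫ x, ζ x ∂μ)) := by
  have hlim := tendsto_integral_mul_of_tendstoInMeasure hϑ
    (fun n => (hζ.birkhoffAverage hS.measurable n).aestronglyMeasurable)
    (fun n => ae_of_all _ (norm_birkhoffAverage_le hC n))
    (hS.tendstoInMeasure_birkhoffAverage_integral hζ hC)
  rw [integral_mul_const, hϑ1, one_mul] at hlim
  simpa only [hP.cesaro_integral_iterate_mul_eq_integral_mul_birkhoffAverage hS.measurable hϑ hϑ0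
    hζ hC] using hlim

theorem tendsto_cesaro_of_comp_eq (hP : IsFrobeniusPerron μ S P) (hS : Measurable S)
    (hϑ : Integrable ϑ μ) (hϑ0 : 0 ≤ᵐ[μ] ϑ) (hζ : Measurable ζ) {C : ℝ} (hC : ∀ x, ‖ζ x‖ ≤ C)
    (hζS : ζ ∘ S = ζ) :
    Tendsto (fun n : ℕ => (n : ℝ)⁻¹ * ∑ k ∈ Finset.range n, ∫ x, (P^[k] ϑ) x * ζ x ∂μ)
      atTop (𝓝 (∫ x, ϑ x * ζ x ∂μ)) := by
  refine tendsto_const_nhds.congr' ((eventually_ne_atTop 0).mono fun n hn => ?_)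
  dsimp only
  rw [hP.cesaro_integral_iterate_mul_eq_integral_mul_birkhoffAverage hS hϑ hϑ0 hζ hC,
    birkhoffAverage_of_comp_eq ℝ hζS (Nat.cast_ne_zero.2 hn)]

end IsFrobeniusPerron

end

/-- Let `(X, 𝒜, μ)` be a probability space and `S : X → X` measure preserving,
with Frobenius–Perron operator `P`.  Then `S` is ergodic iff for every density `ϑ` the Cesàro
averages of the iterates `Pᵏϑ` converge weakly to the constant function `1`: for every bounded
measurable `ζ`, `(1/n) Σ_{k<n} ∫ (Pᵏϑ) ζ dμ → ∫ ζ dμ`. -/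
theorem ergodic_iff_cesaro_weak_convergence
    {X : Type*} [MeasurableSpace X] (μ : Measure X) [IsProbabilityMeasure μ]
    (S : X → X) (hS : Measurable S)
    (hpres : ∀ A : Set X, MeasurableSet A → μ (S ⁻¹' A) = μ A)
    (P : (X → ℝ) → (X → ℝ))
    (hP : ∀ f : X → ℝ, Integrable f μ → 0 ≤ᵐ[μ] f →
      Integrable (P f) μ ∧ 0 ≤ᵐ[μ] P f ∧
      ∀ A : Set X, MeasurableSet A → ∫ x in A, P f x ∂μ = ∫ x in S ⁻¹' A, f x ∂μ) :
    (∀ A : Set X, MeasurableSet A → S ⁻¹' A = A → μ A = 0 ∨ μ A = 1)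
    ↔ ∀ ϑ : X → ℝ, Integrable ϑ μ → 0 ≤ᵐ[μ] ϑ → ∫ x, ϑ x ∂μ = 1 →
        ∀ ζ : X → ℝ, Measurable ζ → (∃ C : ℝ, ∀ x, |ζ x| ≤ C) →
          Tendsto
            (fun n : ℕ => (n : ℝ)⁻¹ * ∑ k ∈ Finset.range n, ∫ x, (P^[k] ϑ) x * ζ x ∂μ)
            atTop (𝓝 (∫ x, ζ x ∂μ)) := by
  have hSμ : MeasurePreserving S μ μ :=
    ⟨hS, Measure.ext fun A hA => by rw [Measure.map_apply hS hA, hpres A hA]⟩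
  refine ⟨fun hinv ϑ hϑ hϑ0 hϑ1 ζ hζ ⟨C, hC⟩ => ?_, fun h A hA hinv => ?_⟩
  · exact IsFrobeniusPerron.tendsto_cesaro_of_ergodic hP (hSμ.ergodic_of_prob_eq_zero_or_one hinv)
      hϑ hϑ0 hϑ1 hζ hC
  refine or_iff_not_imp_left.2 fun hA0 => ?_
  have hA0' : μ.real A ≠ 0 := (measureReal_ne_zero_iff).2 hA0
  set ϑ := A.indicator fun _ => (μ.real A)⁻¹
  set ζ := A.indicator (1 : X → ℝ)
  have hϑ1 : ∫ x, ϑ x ∂μ = 1 := by simp [ϑ, integral_indicator_const _ hA, hA0']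
  have hϑζ : ∫ x, ϑ x * ζ x ∂μ = 1 := by
    rw [← hϑ1]; congr 1; ext x; by_cases hx : x ∈ A <;> simp [ϑ, ζ, hx]
  have hζS : ζ ∘ S = ζ := by
    ext x
    change A.indicator 1 (S x) = A.indicator 1 x
    rw [← Set.indicator_comp_right, hinv]
    rfl
  have hζC : ∀ x, |ζ x| ≤ 1 := fun x => by by_cases hx : x ∈ A <;> simp [ζ, hx]
  have hϑ : Integrable ϑ μ := (integrable_const _).indicator hA
  have hϑ0 : 0 ≤ᵐ[μ] ϑ := ae_of_all _ (Set.indicator_nonneg fun _ _ => by positivity)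
  have hζ : Measurable ζ := measurable_const.indicator hA
  have hμA := tendsto_nhds_unique (h ϑ hϑ hϑ0 hϑ1 ζ hζ ⟨1, hζC⟩)
    (IsFrobeniusPerron.tendsto_cesaro_of_comp_eq hP hS hϑ hϑ0 hζ hζC hζS)
  rw [hϑζ, integral_indicator_one hA] at hμA
  exact (ENNReal.toReal_eq_one_iff _).1 hμA
end

section
/- Let (X, 𝒜, μ) be a σ-finite measure space, S : X → X a measurable nonsingular map, and P the Frobenius–Perron operator associated with S. If S is ergodic (every A ∈ 𝒜 with S⁻¹(A) = A satisfies μ(A) = 0 or μ(X∖A) = 0), then P has at most one stationary density: any two densities ϑ₁, ϑ₂ with Pϑ₁ = ϑ₁ μ-a.e. and Pϑ₂ = ϑ₂ μ-a.e. satisfy ϑ₁ = ϑ₂ μ-a.e. -/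
open MeasureTheory Filter Topology

/-- Let `(X, 𝒜, μ)` be a σ-finite measure space, `S : X → X` a measurable
nonsingular map, and `P` the Frobenius–Perron operator associated with `S`.  If `S` is ergodic,
then `P` has at most one stationary density: any two densities fixed (μ-a.e.) by `P` agree
μ-a.e. -/
theorem ergodic_at_most_one_stationary_density
    {X : Type*} [MeasurableSpace X] (μ : Measure X) [SigmaFinite μ]
    (S : X → X) (hS : Measurable S)
    (hns : ∀ A : Set X, MeasurableSet A → μ A = 0 → μ (S ⁻¹' A) = 0)
    (P : (X → ℝ) → (X → ℝ))
    (hP : ∀ f : X → ℝ, Integrable f μ → 0 ≤ᵐ[μ] f →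
      Integrable (P f) μ ∧ 0 ≤ᵐ[μ] P f ∧
      ∀ A : Set X, MeasurableSet A → ∫ x in A, P f x ∂μ = ∫ x in S ⁻¹' A, f x ∂μ)
    (herg : ∀ A : Set X, MeasurableSet A → S ⁻¹' A = A → μ A = 0 ∨ μ Aᶜ = 0)
    (ϑ₁ ϑ₂ : X → ℝ)
    (h₁i : Integrable ϑ₁ μ) (h₁0 : 0 ≤ᵐ[μ] ϑ₁) (h₁1 : ∫ x, ϑ₁ x ∂μ = 1)
    (h₂i : Integrable ϑ₂ μ) (h₂0 : 0 ≤ᵐ[μ] ϑ₂) (h₂1 : ∫ x, ϑ₂ x ∂μ = 1)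
    (hfix₁ : P ϑ₁ =ᵐ[μ] ϑ₁) (hfix₂ : P ϑ₂ =ᵐ[μ] ϑ₂) :
    ϑ₁ =ᵐ[μ] ϑ₂ := by
  -- the difference and its measurable representative
  set g : X → ℝ := fun x => ϑ₁ x - ϑ₂ x with hgdef
  have hgi : Integrable g μ := h₁i.sub h₂i
  set h : X → ℝ := hgi.1.mk g with hhdef
  have hgh : g =ᵐ[μ] h := hgi.1.ae_eq_mk
  have hhm : StronglyMeasurable h := hgi.1.stronglyMeasurable_mk
  have hhmeas : Measurable h := hhm.measurable
  have hhi : Integrable h μ := hgi.congr hgh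
  have hint0 : ∫ x, h x ∂μ = 0 := by
    rw [← integral_congr_ae hgh]
    simp [hgdef, integral_sub h₁i h₂i, h₁1, h₂1]
  -- invariance of the stationary densities under the set-integral identity
  have hkey₁ : ∀ A : Set X, MeasurableSet A →
      ∫ x in A, ϑ₁ x ∂μ = ∫ x in S ⁻¹' A, ϑ₁ x ∂μ := by
    intro A hA
    have := (hP ϑ₁ h₁i h₁0).2.2 A hA
    rwa [integral_congr_ae (ae_restrict_of_ae hfix₁)] at this
  have hkey₂ : ∀ A : Set X, MeasurableSet A →
      ∫ x in A, ϑ₂ x ∂μ = ∫ x in S ⁻¹' A, ϑ₂ x ∂μ := by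
    intro A hA
    have := (hP ϑ₂ h₂i h₂0).2.2 A hA
    rwa [integral_congr_ae (ae_restrict_of_ae hfix₂)] at this
  have hkey : ∀ A : Set X, MeasurableSet A →
      ∫ x in A, h x ∂μ = ∫ x in S ⁻¹' A, h x ∂μ := by
    intro A hA
    have h1 : ∫ x in A, h x ∂μ = ∫ x in A, g x ∂μ :=
      integral_congr_ae (ae_restrict_of_ae hgh.symm)
    have h2 : ∫ x in S ⁻¹' A, h x ∂μ = ∫ x in S ⁻¹' A, g x ∂μ :=
      integral_congr_ae (ae_restrict_of_ae hgh.symm)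
    rw [h1, h2, hgdef]
    simp only
    rw [integral_sub h₁i.integrableOn h₂i.integrableOn,
      integral_sub h₁i.integrableOn h₂i.integrableOn, hkey₁ A hA, hkey₂ A hA]
  -- positive part
  set hp : X → ℝ := fun x => max (h x) 0 with hpdef
  have hpi : Integrable hp μ := hhi.pos_part
  have hp0 : ∀ x, 0 ≤ hp x := fun x => le_max_right _ _
  have hhp : ∀ x, h x ≤ hp x := fun x => le_max_left _ _
  set B : Set X := {x | 0 < h x} with hBdef
  have hBm : MeasurableSet B := measurableSet_lt measurable_const hhmeas
  have hpB : ∀ x ∈ B, hp x = h x := fun x hx => max_eq_left (le_of_lt hx)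
  have hpBc : ∀ x ∈ Bᶜ, hp x = 0 := fun x hx =>
    max_eq_right (le_of_not_gt hx)
  have hintp : ∫ x in B, h x ∂μ = ∫ x, hp x ∂μ := by
    rw [← integral_add_compl hBm hpi,
      setIntegral_congr_fun hBm.compl hpBc, integral_zero,
      setIntegral_congr_fun hBm hpB, add_zero]
  -- the iterated preimages of B
  set C : ℕ → Set X := fun n => S^[n] ⁻¹' B with hCdef
  have hCm : ∀ n, MeasurableSet (C n) := fun n => (hS.iterate n) hBm
  have hC0 : C 0 = B := by simp [hCdef]
  have hCsucc : ∀ n, C (n + 1) = S ⁻¹' (C n) := by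
    intro n
    simp only [hCdef, Function.iterate_succ, Set.preimage_comp]
  have hmain : ∀ n, ∫ x in C n, h x ∂μ = ∫ x, hp x ∂μ := by
    intro n
    induction n with
    | zero => rw [hC0]; exact hintp
    | succ n ih => rw [hCsucc, ← hkey (C n) (hCm n)]; exact ih
  -- on each `C n`, `h = hp` a.e.; off each `C n`, `hp = 0` a.e.
  have haux : ∀ n, ∫ x in C n, hp x ∂μ = ∫ x, hp x ∂μ := by
    intro n
    have hle1 : ∫ x in C n, h x ∂μ ≤ ∫ x in C n, hp x ∂μ :=
      setIntegral_mono_on hhi.integrableOn hpi.integrableOn (hCm n)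
        fun x _ => hhp x
    have hle2 : ∫ x in C n, hp x ∂μ ≤ ∫ x, hp x ∂μ :=
      setIntegral_le_integral hpi (Eventually.of_forall hp0)
    have := hmain n
    linarith
  have heqC : ∀ n, ∀ᵐ x ∂μ, x ∈ C n → h x = hp x := by
    intro n
    have hdiff : ∫ x in C n, (hp x - h x) ∂μ = 0 := by
      rw [integral_sub hpi.integrableOn hhi.integrableOn, haux n, hmain n,
        sub_self]
    have h0 : 0 ≤ᵐ[μ.restrict (C n)] fun x => hp x - h x :=
      Eventually.of_forall fun x => sub_nonneg.mpr (hhp x)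
    have := (integral_eq_zero_iff_of_nonneg_ae h0
      (hpi.integrableOn.sub hhi.integrableOn)).mp hdiff
    have := (ae_restrict_iff' (hCm n)).mp this
    filter_upwards [this] with x hx hxC
    have := hx hxC
    simp only [Pi.zero_apply] at this
    linarith
  have hzeroC : ∀ n, ∀ᵐ x ∂μ, x ∈ (C n)ᶜ → hp x = 0 := by
    intro n
    have hcompl : ∫ x in (C n)ᶜ, hp x ∂μ = 0 := by
      have := integral_add_compl (hCm n) hpi
      rw [haux n] at this
      linarith
    have h0 : 0 ≤ᵐ[μ.restrict (C n)ᶜ] hp :=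
      Eventually.of_forall hp0
    have := (integral_eq_zero_iff_of_nonneg_ae h0 hpi.integrableOn).mp hcompl
    have := (ae_restrict_iff' (hCm n).compl).mp this
    filter_upwards [this] with x hx hxC
    exact hx hxC
  -- the union is a.e. invariant
  set Ainf : Set X := ⋃ n, C n with hAdef
  have hAm : MeasurableSet Ainf := MeasurableSet.iUnion hCm
  have hpre : S ⁻¹' Ainf = ⋃ n, C (n + 1) := by
    rw [hAdef, Set.preimage_iUnion]
    exact Set.iUnion_congr fun n => (hCsucc n).symm
  have hsub : S ⁻¹' Ainf ⊆ Ainf := by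
    rw [hpre]; exact Set.iUnion_subset fun n => Set.subset_iUnion C (n + 1)
  have haeinv : S ⁻¹' Ainf =ᵐ[μ] Ainf := by
    rw [Filter.eventuallyEq_set]
    have h1 : ∀ᵐ x ∂μ, x ∈ (C 1)ᶜ → hp x = 0 := hzeroC 1
    filter_upwards [h1] with x hx
    constructor
    · exact fun hxm => hsub hxm
    · intro hxA
      rcases Set.mem_iUnion.mp hxA with ⟨n, hn⟩
      rcases n with _ | n
      · -- x ∈ B; show x ∈ C 1, else hp x = 0 contradicting h x > 0
        rw [hC0] at hn
        by_contra hxp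
        have hx1 : x ∈ (C 1)ᶜ := by
          intro hx1
          exact hxp (by rw [hpre]; exact Set.mem_iUnion.mpr ⟨0, hx1⟩)
        have := hx hx1
        have hpos : 0 < h x := hn
        rw [hpB x hn] at this
        linarith
      · rw [hpre]
        exact Set.mem_iUnion.mpr ⟨n, hn⟩
  -- quasi measure preserving
  have hqmp : Measure.QuasiMeasurePreserving S μ μ :=
    ⟨hS, Measure.AbsolutelyContinuous.mk fun A hA h0 => by
      rw [Measure.map_apply hS hA]; exact hns A hA h0⟩
  obtain ⟨T, hTm, hTeq, hTinv⟩ :=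
    hqmp.exists_preimage_eq_of_preimage_ae hAm.nullMeasurableSet haeinv
  -- conclude h = 0 a.e. in both ergodic cases
  have hzero : h =ᵐ[μ] 0 := by
    rcases herg T hTm hTinv with hnull | hconull
    · -- μ Ainf = 0, hence μ B = 0, hence hp = 0 a.e., hence h = hp = 0 a.e.
      have hA0 : μ Ainf = 0 := by
        rw [← measure_congr hTeq]; exact hnull
      have hB0 : μ B = 0 :=
        measure_mono_null (hC0 ▸ Set.subset_iUnion C 0) hA0
      have hpz : hp =ᵐ[μ] 0 := by
        have : {x | hp x ≠ 0} ⊆ B := by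
          intro x hx
          by_contra hxB
          exact hx (hpBc x hxB)
        exact measure_mono_null this hB0
      have hintp0 : ∫ x, hp x ∂μ = 0 := by
        rw [integral_congr_ae hpz]; simp
      have hdiff : ∫ x, (hp x - h x) ∂μ = 0 := by
        rw [integral_sub hpi hhi, hintp0, hint0, sub_self]
      have h0 : 0 ≤ᵐ[μ] fun x => hp x - h x :=
        Eventually.of_forall fun x => sub_nonneg.mpr (hhp x)
      have := (integral_eq_zero_iff_of_nonneg_ae h0 (hpi.sub hhi)).mp hdiff
      filter_upwards [this, hpz] with x hx hpx
      simp only [Pi.zero_apply] at hx hpx ⊢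
      linarith
    · -- Ainf conull: h = hp a.e., so ∫ hp = 0, hp ≥ 0 ⇒ hp = 0 a.e. ⇒ h = 0 a.e.
      have hAc0 : μ Ainfᶜ = 0 := by
        rw [← measure_congr hTeq.compl]; exact hconull
      have hmemA : ∀ᵐ x ∂μ, x ∈ Ainf := by
        rw [ae_iff]
        exact measure_mono_null (fun x hx => hx) hAc0
      have hhp_ae : h =ᵐ[μ] hp := by
        have hall : ∀ᵐ x ∂μ, ∀ n, x ∈ C n → h x = hp x := ae_all_iff.mpr heqC
        filter_upwards [hall, hmemA] with x hx hxA
        rcases Set.mem_iUnion.mp hxA with ⟨n, hn⟩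
        exact hx n hn
      have hintp0 : ∫ x, hp x ∂μ = 0 := by
        rw [← integral_congr_ae hhp_ae, hint0]
      have := (integral_eq_zero_iff_of_nonneg_ae
        (Eventually.of_forall hp0) hpi).mp hintp0
      filter_upwards [this, hhp_ae] with x hx hpx
      simp only [Pi.zero_apply] at hx ⊢
      rw [hpx, hx]
  -- finish
  have : g =ᵐ[μ] 0 := hgh.trans hzero
  filter_upwards [this] with x hx
  have : ϑ₁ x - ϑ₂ x = 0 := hx
  linarith
end

section
/- Let (X, 𝒜, μ) be a σ-finite measure space, S : X → X a measurable nonsingular map, and P the Frobenius–Perron operator associated with S. Suppose P has a unique stationary density ϑ⋆ (i.e. Pϑ⋆ = ϑ⋆ μ-a.e., and every density ϑ with Pϑ = ϑ μ-a.e. equals ϑ⋆ μ-a.e.) and ϑ⋆(x) > 0 for μ-almost every x. Then S is ergodic: every A ∈ 𝒜 with S⁻¹(A) = A satisfies μ(A) = 0 or μ(X∖A) = 0. -/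
open MeasureTheory Filter Topology

/-- Let `(X, 𝒜, μ)` be a σ-finite measure space, `S : X → X` a measurable
nonsingular map, and `P` the Frobenius–Perron operator associated with `S`.  If `P` has a unique
stationary density `ϑ⋆`, and `ϑ⋆ > 0` μ-a.e., then `S` is ergodic. -/
theorem unique_positive_stationary_density_implies_ergodic
    {X : Type*} [MeasurableSpace X] (μ : Measure X) [SigmaFinite μ]
    (S : X → X) (hS : Measurable S)
    (hns : ∀ A : Set X, MeasurableSet A → μ A = 0 → μ (S ⁻¹' A) = 0)
    (P : (X → ℝ) → (X → ℝ))
    (hP : ∀ f : X → ℝ, Integrable f μ → 0 ≤ᵐ[μ] f →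
      Integrable (P f) μ ∧ 0 ≤ᵐ[μ] P f ∧
      ∀ A : Set X, MeasurableSet A → ∫ x in A, P f x ∂μ = ∫ x in S ⁻¹' A, f x ∂μ)
    (ϑs : X → ℝ)
    (hsi : Integrable ϑs μ) (hs0 : 0 ≤ᵐ[μ] ϑs) (hs1 : ∫ x, ϑs x ∂μ = 1)
    (hfix : P ϑs =ᵐ[μ] ϑs)
    (hpos : ∀ᵐ x ∂μ, 0 < ϑs x)
    (huniq : ∀ ϑ : X → ℝ, Integrable ϑ μ → 0 ≤ᵐ[μ] ϑ → ∫ x, ϑ x ∂μ = 1 →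
      P ϑ =ᵐ[μ] ϑ → ϑ =ᵐ[μ] ϑs) :
    ∀ A : Set X, MeasurableSet A → S ⁻¹' A = A → μ A = 0 ∨ μ Aᶜ = 0 := by
  intro A hA hinv
  by_contra h
  push_neg at h
  obtain ⟨hA0, hAc0⟩ := h
  -- c := ∫_A ϑs > 0
  set c : ℝ := ∫ x in A, ϑs x ∂μ with hc
  have hcpos : 0 < c := by
    rw [hc, setIntegral_pos_iff_support_of_nonneg_ae (ae_restrict_of_ae hs0)
      hsi.integrableOn]
    have hsub : μ (A \ Function.support ϑs) = 0 := by
      refine measure_mono_null (fun x hx => ?_) (by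
        have := hpos
        rw [ae_iff] at this
        exact this)
      intro hx0
      exact hx.2 (ne_of_gt hx0)
    have : μ A ≤ μ (Function.support ϑs ∩ A) + μ (A \ Function.support ϑs) := by
      refine (measure_mono ?_).trans (measure_union_le _ _)
      intro x hx
      by_cases hxs : x ∈ Function.support ϑs
      · exact Or.inl ⟨hxs, hx⟩
      · exact Or.inr ⟨hx, hxs⟩
    rw [hsub, add_zero] at this
    exact lt_of_lt_of_le (pos_iff_ne_zero.mpr hA0) this
  -- candidate density
  set f : X → ℝ := fun x => c⁻¹ * ϑs x with hf
  set ϑ : X → ℝ := A.indicator f with hϑ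
  have hfint : Integrable f μ := hsi.const_mul c⁻¹
  have hϑint : Integrable ϑ μ := hfint.indicator hA
  have hϑ0 : 0 ≤ᵐ[μ] ϑ := by
    filter_upwards [hs0] with x hx
    by_cases hxA : x ∈ A
    · rw [hϑ, Set.indicator_of_mem hxA]
      exact mul_nonneg (inv_nonneg.mpr hcpos.le) hx
    · rw [hϑ, Set.indicator_of_notMem hxA]
      exact le_refl 0
  have hϑ1 : ∫ x, ϑ x ∂μ = 1 := by
    rw [hϑ, integral_indicator hA, hf]
    simp only [integral_const_mul]
    rw [← hc, inv_mul_cancel₀ hcpos.ne']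
  -- set integrals of ϑ
  have hset : ∀ B : Set X, MeasurableSet B →
      ∫ x in B, ϑ x ∂μ = c⁻¹ * ∫ x in B ∩ A, ϑs x ∂μ := by
    intro B hB
    rw [hϑ, setIntegral_indicator hA, hf, integral_const_mul]
  -- fixed point property of ϑs on sets
  have hfixset : ∀ B : Set X, MeasurableSet B →
      ∫ x in B, ϑs x ∂μ = ∫ x in S ⁻¹' B, ϑs x ∂μ := by
    intro B hB
    rw [← (hP ϑs hsi hs0).2.2 B hB]
    exact setIntegral_congr_ae hB (hfix.mono fun x hx _ => hx.symm)
  -- P ϑ = ϑ a.e.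
  obtain ⟨hPϑint, hPϑ0, hPϑset⟩ := hP ϑ hϑint hϑ0
  have hPfix : P ϑ =ᵐ[μ] ϑ := by
    refine ae_eq_of_forall_setIntegral_eq_of_sigmaFinite
      (fun s hs _ => hPϑint.integrableOn) (fun s hs _ => hϑint.integrableOn) ?_
    intro B hB _
    rw [hPϑset B hB, hset B hB]
    have hpre : S ⁻¹' B ∩ A = S ⁻¹' (B ∩ A) := by
      rw [Set.preimage_inter, hinv]
    rw [hset (S ⁻¹' B) (hS hB), hpre, ← hfixset (B ∩ A) (hB.inter hA)]
  -- uniqueness gives ϑ = ϑs a.e., contradicting ϑs > 0 on Aᶜ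
  have heq : ϑ =ᵐ[μ] ϑs := huniq ϑ hϑint hϑ0 hϑ1 hPfix
  have : μ Aᶜ = 0 := by
    have : ∀ᵐ x ∂μ, x ∈ A := by
      filter_upwards [heq, hpos] with x hx hxpos
      by_contra hxA
      rw [hϑ, Set.indicator_of_notMem hxA] at hx
      exact absurd hx.symm (ne_of_gt hxpos)
    rwa [ae_iff] at this
  exact hAc0 this
end

section
/- Let (X, 𝒜, μ) be a measure space, let ϑ⋆ be a density with ϑ⋆(x) > 0 for μ-almost every x, and let (ξ_n) be a sequence of densities converging to ϑ⋆ in L¹(μ) such that for some constant c ≥ 1 one has ξ_n ≤ c·ϑ⋆ μ-a.e. for every n. Then the relative entropies converge to zero: H_r(ξ_n | ϑ⋆) = ∫_X ξ_n log(ξ_n/ϑ⋆) dμ → 0 as n → ∞. -/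
open MeasureTheory Filter Topology

lemma mul_log_abs_le {t c : ℝ} (ht : 0 ≤ t) (htc : t ≤ c) (hc : 1 ≤ c) :
    |t * Real.log t| ≤ c * |t - 1| := by
  rcases eq_or_lt_of_le ht with h0 | h0
  · rw [← h0]
    simp only [zero_mul, abs_zero]
    positivity
  · have hlog := Real.log_le_sub_one_of_pos h0
    have hlow : t - 1 ≤ t * Real.log t := by
      have h2 := Real.log_le_sub_one_of_pos (inv_pos.mpr h0)
      rw [Real.log_inv] at h2
      have ht' : t * t⁻¹ = 1 := mul_inv_cancel₀ (ne_of_gt h0)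
      nlinarith
    rcases le_total t 1 with h1 | h1
    · have hneg : t * Real.log t ≤ 0 :=
        mul_nonpos_of_nonneg_of_nonpos ht (Real.log_nonpos ht h1)
      rw [abs_of_nonpos hneg, abs_of_nonpos (by linarith : t - 1 ≤ 0)]
      nlinarith
    · have hnn : 0 ≤ t * Real.log t := mul_nonneg h0.le (Real.log_nonneg h1)
      rw [abs_of_nonneg hnn, abs_of_nonneg (by linarith : (0:ℝ) ≤ t - 1)]
      nlinarith

/-- Let `ϑ⋆` be a density with `ϑ⋆ > 0` μ-a.e., and let `(ξ_n)` be densities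
converging to `ϑ⋆` in `L¹(μ)` with `ξ_n ≤ c·ϑ⋆` μ-a.e. for some constant `c ≥ 1`.  Then the
relative entropies converge to zero: `H_r(ξ_n | ϑ⋆) = ∫ ξ_n log(ξ_n/ϑ⋆) dμ → 0`. -/
theorem relative_entropy_tendsto_zero
    {X : Type*} [MeasurableSpace X] (μ : Measure X)
    (ϑs : X → ℝ)
    (hsi : Integrable ϑs μ) (hs1 : ∫ x, ϑs x ∂μ = 1) (hspos : ∀ᵐ x ∂μ, 0 < ϑs x)
    (ξ : ℕ → X → ℝ)
    (hξ : ∀ n, Integrable (ξ n) μ ∧ 0 ≤ᵐ[μ] ξ n ∧ ∫ x, ξ n x ∂μ = 1)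
    (c : ℝ) (hc : 1 ≤ c)
    (hdom : ∀ n, ∀ᵐ x ∂μ, ξ n x ≤ c * ϑs x)
    (hconv : Tendsto (fun n : ℕ => ∫ x, |ξ n x - ϑs x| ∂μ) atTop (𝓝 0)) :
    Tendsto (fun n : ℕ => ∫ x, ξ n x * Real.log (ξ n x / ϑs x) ∂μ) atTop (𝓝 0) := by
  set f : ℕ → X → ℝ := fun n x => ξ n x * Real.log (ξ n x / ϑs x) with hf
  have hbound : ∀ n, ∀ᵐ x ∂μ, |f n x| ≤ c * |ξ n x - ϑs x| := by
    intro n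
    filter_upwards [hspos, (hξ n).2.1, hdom n] with x hϑ hξ0 hξc
    have ht0 : 0 ≤ ξ n x / ϑs x := div_nonneg hξ0 hϑ.le
    have htc : ξ n x / ϑs x ≤ c := (div_le_iff₀ hϑ).mpr hξc
    have hk := mul_log_abs_le ht0 htc hc
    have heq1 : f n x = ϑs x * ((ξ n x / ϑs x) * Real.log (ξ n x / ϑs x)) := by
      simp only [hf]
      field_simp
    have heq2 : ϑs x * ((ξ n x / ϑs x) - 1) = ξ n x - ϑs x := by
      field_simp
    calc |f n x| = ϑs x * |(ξ n x / ϑs x) * Real.log (ξ n x / ϑs x)| := by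
          rw [heq1, abs_mul, abs_of_pos hϑ]
      _ ≤ ϑs x * (c * |ξ n x / ϑs x - 1|) := by
          exact mul_le_mul_of_nonneg_left hk hϑ.le
      _ = c * (ϑs x * |ξ n x / ϑs x - 1|) := by ring
      _ = c * |ξ n x - ϑs x| := by
          have h3 := abs_mul (ϑs x) (ξ n x / ϑs x - 1)
          rw [heq2, abs_of_pos hϑ] at h3
          rw [← h3]
  have hgint : ∀ n, Integrable (fun x => c * |ξ n x - ϑs x|) μ :=
    fun n => (((hξ n).1.sub hsi).abs).const_mul c
  have hint : ∀ n, Integrable (f n) μ := by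
    intro n
    have hm : AEStronglyMeasurable (f n) μ := by
      have h1 : AEMeasurable (ξ n) μ := (hξ n).1.aemeasurable
      have h2 : AEMeasurable ϑs μ := hsi.aemeasurable
      exact (h1.mul (Real.measurable_log.comp_aemeasurable (h1.div h2))).aestronglyMeasurable
    refine Integrable.mono' (hgint n) hm ?_
    filter_upwards [hbound n] with x hx
    simpa [Real.norm_eq_abs] using hx
  have h2 : Tendsto (fun n => c * ∫ x, |ξ n x - ϑs x| ∂μ) atTop (𝓝 0) := by
    simpa using hconv.const_mul c
  refine squeeze_zero_norm (fun n => ?_) h2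
  calc ‖∫ x, f n x ∂μ‖ ≤ ∫ x, ‖f n x‖ ∂μ := norm_integral_le_integral_norm _
    _ ≤ ∫ x, c * |ξ n x - ϑs x| ∂μ := by
        refine integral_mono_ae (hint n).norm (hgint n) ?_
        filter_upwards [hbound n] with x hx
        simpa [Real.norm_eq_abs] using hx
    _ = c * ∫ x, |ξ n x - ϑs x| ∂μ := integral_const_mul c _
end
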